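/- Let M be a connected Hausdorff topological manifold of dimension m ≥ 2 (a connected Hausdorff topological space locally homeomorphic to ℝ^m, i.e. a charted space modelled on ℝ^m with m ≥ 2). Then the complement of the diagonal in M × M, namely the set {(x, y) ∈ M × M : x ≠ y}, is a connected subset of M × M. -/

import Mathlib

/-!
A chart around `a` gives an open neighbourhood `W` of `a` with `W \ {a}` homeomorphic to a
punctured ball, which is connected in dimension `≥ 2`. Gluing `W` back onto `{a}ᶜ` shows that a
separation of `{a}ᶜ` would separate the connected manifold, so every `{a}ᶜ` is connected. The
complement of the diagonal is then connected: any two of its points `(a, b)` and `(c, d)` are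
joined through the slices `{a} × {a}ᶜ`, `{e}ᶜ × {e}` and `{c} × {c}ᶜ`, for a third point
`e ∉ {a, c}`.
-/

open Set Metric

section NormedSpace

variable {E : Type*} [NormedAddCommGroup E] [NormedSpace ℝ E]

theorem isPreconnected_ball_diff_center (h : 1 < Module.rank ℝ E) (c : E) (r : ℝ) :
    IsPreconnected (ball c r \ {c}) := by
  rcases le_or_gt r 0 with hr | hr
  · simp [ball_eq_empty.2 hr, isPreconnected_empty]
  set B := OpenPartialHomeomorph.univBall c r
  have hsource : B.source = univ := OpenPartialHomeomorph.univBall_source c r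
  have hB : Continuous B := continuousOn_univ.1 (hsource ▸ B.continuousOn)
  have himage : B '' {0}ᶜ = ball c r \ {c} := by
    rw [compl_eq_univ_sdiff, ← hsource, B.injOn.image_sdiff_subset (hsource ▸ subset_univ _),
      B.image_source_eq_target, image_singleton, OpenPartialHomeomorph.univBall_apply_zero,
      OpenPartialHomeomorph.univBall_target c hr]
  rw [← himage]
  exact (isConnected_compl_singleton_of_one_lt_rank h 0).isPreconnected.image _ hB.continuousOn

end NormedSpace

namespace ChartedSpace

variable {E : Type*} [NormedAddCommGroup E] [NormedSpace ℝ E]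
  {M : Type*} [TopologicalSpace M] [ChartedSpace E M]

theorem exists_isOpen_isPreconnected_diff_singleton (h : 1 < Module.rank ℝ E) (a : M) :
    ∃ W : Set M, IsOpen W ∧ a ∈ W ∧ IsPreconnected (W \ {a}) := by
  set e := chartAt E a
  obtain ⟨r, hr, hball⟩ := Metric.isOpen_iff.1 e.open_target (e a) (mem_chart_target E a)
  refine ⟨e.symm '' ball (e a) r, e.isOpen_image_symm_of_subset_target isOpen_ball hball,
    ⟨e a, mem_ball_self hr, e.left_inv (mem_chart_source E a)⟩, ?_⟩
  have himage : e.symm '' ball (e a) r \ {a} = e.symm '' (ball (e a) r \ {e a}) := by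
    rw [(e.symm.injOn.mono hball).image_sdiff_subset (singleton_subset_iff.2 (mem_ball_self hr)),
      image_singleton, e.left_inv (mem_chart_source E a)]
  rw [himage]
  exact (isPreconnected_ball_diff_center h _ _).image _
    (e.continuousOn_symm.mono (sdiff_subset.trans hball))

theorem infinite [Nontrivial E] [Nonempty M] : Infinite M := by
  obtain ⟨a⟩ := ‹Nonempty M›
  set e := chartAt E a
  have htarget : e.target.Infinite :=
    infinite_of_mem_nhds (e a) (e.open_target.mem_nhds (mem_chart_target E a))
  rw [← infinite_univ_iff]
  exact (htarget.image e.symm.injOn).mono (subset_univ _)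

end ChartedSpace

theorem isPreconnected_compl_singleton_of_isPreconnected_diff_singleton {X : Type*}
    [TopologicalSpace X] [PreconnectedSpace X] [T1Space X] {a : X} {W : Set X} (hW : IsOpen W)
    (haW : a ∈ W) (hWa : IsPreconnected (W \ {a})) : IsPreconnected ({a}ᶜ : Set X) := by
  rw [isPreconnected_iff_subset_of_disjoint]
  intro u v hu hv hcover hdisj
  wlog hWu : W \ {a} ⊆ u generalizing u v
  · have hWv : W \ {a} ⊆ v := by
      refine (isPreconnected_iff_subset_of_disjoint.1 hWa u v hu hv ?_ ?_).resolve_left hWu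
      · exact (sdiff_subset_compl _ _).trans hcover
      · exact subset_empty_iff.1 (hdisj ▸ inter_subset_inter_left _ (sdiff_subset_compl _ _))
    exact (this v u hv hu (union_comm u v ▸ hcover) (inter_comm u v ▸ hdisj) hWv).symm
  have hnot_both (x : X) (hxa : x ≠ a) (hxu : x ∈ u) : x ∉ v := fun hxv =>
    eq_empty_iff_forall_notMem.1 hdisj x ⟨hxa, hxu, hxv⟩
  -- The open sets `u ∪ W` and `v \ {a}` would separate `X`.
  have hcover' : univ ⊆ (u ∪ W) ∪ (v ∩ {a}ᶜ) := by
    intro x _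
    by_cases hxa : x = a
    · exact Or.inl (Or.inr (hxa ▸ haW))
    · rcases hcover hxa with hxu | hxv
      exacts [Or.inl (Or.inl hxu), Or.inr ⟨hxv, hxa⟩]
  have hdisj' : Disjoint (u ∪ W) (v ∩ {a}ᶜ) := by
    refine disjoint_left.2 fun x hx ⟨hxv, hxa⟩ => hnot_both x hxa ?_ hxv
    exact hx.elim id fun hxW => hWu ⟨hxW, hxa⟩
  have hsplit : univ ⊆ u ∪ W := isPreconnected_univ.subset_left_of_subset_union
    (hu.union hW) (hv.inter isOpen_compl_singleton) hdisj' hcover' ⟨a, mem_univ a, Or.inr haW⟩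
  exact Or.inl fun x hxa => (hsplit (mem_univ x)).elim id fun hxW => hWu ⟨hxW, hxa⟩

theorem isConnected_compl_diagonal {X : Type*} [TopologicalSpace X] [Infinite X]
    (h : ∀ a : X, IsPreconnected ({a}ᶜ : Set X)) : IsConnected (diagonal X)ᶜ := by
  obtain ⟨a, b, hab⟩ := exists_pair_ne X
  refine ⟨⟨(a, b), hab⟩, isPreconnected_of_forall_pair ?_⟩
  rintro ⟨a, b⟩ hab ⟨c, d⟩ hcd
  classical
  obtain ⟨e, he⟩ := Infinite.exists_notMem_finset ({a, c} : Finset X)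
  simp only [Finset.mem_insert, Finset.mem_singleton, not_or] at he
  have hV (x : X) : IsPreconnected (({x} : Set X) ×ˢ {x}ᶜ) :=
    isPreconnected_singleton.prod (h x)
  have hH (y : X) : IsPreconnected (({y}ᶜ : Set X) ×ˢ {y}) :=
    (h y).prod isPreconnected_singleton
  refine ⟨{a} ×ˢ {a}ᶜ ∪ ({e}ᶜ ×ˢ {e} ∪ {c} ×ˢ {c}ᶜ), ?_, ?_, ?_, ?_⟩
  · rintro ⟨x, y⟩ (⟨rfl, hy⟩ | ⟨hx, rfl⟩ | ⟨rfl, hy⟩) (hxy : x = y)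
    exacts [hy hxy.symm, hx hxy, hy hxy.symm]
  · exact Or.inl ⟨rfl, Ne.symm hab⟩
  · exact Or.inr (Or.inr ⟨rfl, Ne.symm hcd⟩)
  · refine (hV a).union (a, e) ⟨rfl, he.1⟩ (Or.inl ⟨Ne.symm he.1, rfl⟩) ?_
    exact (hH e).union (c, e) ⟨Ne.symm he.2, rfl⟩ ⟨rfl, he.2⟩ (hV c)

theorem isConnected_compl_diagonal_of_manifold_general
    (m : ℕ) (hm : 2 ≤ m)
    (M : Type*) [TopologicalSpace M] [ConnectedSpace M]
    [ChartedSpace (EuclideanSpace ℝ (Fin m)) M] :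
    IsConnected {p : M × M | p.1 ≠ p.2} := by
  have hrank : 1 < Module.rank ℝ (EuclideanSpace ℝ (Fin m)) := by
    rw [← Module.finrank_eq_rank, finrank_euclideanSpace_fin]
    exact_mod_cast hm
  have : T1Space M := ChartedSpace.t1Space (EuclideanSpace ℝ (Fin m)) M
  have : Nontrivial (EuclideanSpace ℝ (Fin m)) :=
    rank_pos_iff_nontrivial.1 (zero_lt_one.trans hrank)
  have : Infinite M := ChartedSpace.infinite (E := EuclideanSpace ℝ (Fin m))
  refine isConnected_compl_diagonal fun a => ?_
  obtain ⟨W, hW, haW, hWa⟩ := ChartedSpace.exists_isOpen_isPreconnected_diff_singleton hrank a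
  exact isPreconnected_compl_singleton_of_isPreconnected_diff_singleton hW haW hWa

/-- For a connected Hausdorff topological manifold `M` of dimension `m ≥ 2`,
the complement of the diagonal in `M × M` is connected. -/
theorem isConnected_compl_diagonal_of_manifold
    (m : ℕ) (hm : 2 ≤ m)
    (M : Type*) [TopologicalSpace M] [T2Space M] [ConnectedSpace M]
    [ChartedSpace (EuclideanSpace ℝ (Fin m)) M] :
    IsConnected {p : M × M | p.1 ≠ p.2} :=
  isConnected_compl_diagonal_of_manifold_general m hm M
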